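/- With v₀(y) = cos(k₀·y) and hypothesis (H), the transversality condition holds: ∂_c L_c[v₀]|_{c=c₀} = ∇·(Φ*∇v₀) = −|k₀|² Φ̂(k₀) v₀, which does not belong to Ran(L_{c₀}) = {g : ĝ(k₀) = 0}. -/

import Mathlib

/-- `|k|²` for a frequency `k ∈ ℤ^d`. -/
noncomputable def freqSq (d : ℕ) (k : Fin d → ℤ) : ℝ := ∑ i, ((k i : ℝ))^2

/-- Fourier coefficients of `v₀(y) = cos(k₀·y)`: `1/2` at `±k₀`, `0` elsewhere. -/
noncomputable def cosCoeff (d : ℕ) (k₀ : Fin d → ℤ) : (Fin d → ℤ) → ℂ :=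
  fun k => if k = k₀ ∨ k = -k₀ then (1 / 2 : ℂ) else 0

lemma freqSq_neg (d : ℕ) (k : Fin d → ℤ) : freqSq d (-k) = freqSq d k := by
  unfold freqSq; simp

lemma freqSq_ne (d : ℕ) (k : Fin d → ℤ) (hk : k ≠ 0) : freqSq d k ≠ 0 := by
  unfold freqSq
  intro h
  apply hk
  funext i
  have hnn : ∀ j ∈ Finset.univ, (0:ℝ) ≤ ((k j : ℝ))^2 := fun j _ => sq_nonneg _
  have := (Finset.sum_eq_zero_iff_of_nonneg hnn).mp h i (Finset.mem_univ i)
  have : (k i : ℝ) = 0 := by nlinarith [sq_nonneg ((k i : ℝ))]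
  exact_mod_cast this

/-- Transversality: with `v₀(y) = cos(k₀·y)`, the derivative
`∂_c L_c[v₀]|_{c=c₀} = ∇·(Φ*∇v₀)` (Fourier coefficients `k ↦ -|k|² Φ̂(k) v̂₀(k)`) equals
`-|k₀|² Φ̂(k₀) v₀`, its `k₀`-th Fourier coefficient is nonzero, and hence it does not lie
in `Ran(L_{c₀}) = {g : ĝ(k₀) = 0}` (`L_{c₀}` having symbol `-|k|²(a + c₀Φ̂(k))`,
`c₀ = -a/Φ̂(k₀)`). -/
theorem transversality_condition
    (d : ℕ) (a : ℝ) (ha : 0 < a)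
    (Φhat : (Fin d → ℤ) → ℝ) (hΦeven : ∀ k, Φhat (-k) = Φhat k)
    (k₀ : Fin d → ℤ) (hk₀ : k₀ ≠ 0) (hΦk₀ : Φhat k₀ ≠ 0) :
    (∀ k, -((freqSq d k : ℝ) : ℂ) * ((Φhat k : ℝ) : ℂ) * cosCoeff d k₀ k
        = ((-(freqSq d k₀) * Φhat k₀ : ℝ) : ℂ) * cosCoeff d k₀ k)
    ∧ -((freqSq d k₀ : ℝ) : ℂ) * ((Φhat k₀ : ℝ) : ℂ) * cosCoeff d k₀ k₀ ≠ 0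
    ∧ ¬ ∃ v : (Fin d → ℤ) → ℂ,
        ∀ k, -((freqSq d k : ℝ) : ℂ) * ((Φhat k : ℝ) : ℂ) * cosCoeff d k₀ k
          = ((-(freqSq d k) * (a + (-a / Φhat k₀) * Φhat k) : ℝ) : ℂ) * v k := by
  have hfk : freqSq d k₀ ≠ 0 := freqSq_ne d k₀ hk₀
  have hck : cosCoeff d k₀ k₀ = 1/2 := by unfold cosCoeff; simp
  refine ⟨?_, ?_, ?_⟩
  · intro k
    unfold cosCoeff
    by_cases h : k = k₀ ∨ k = -k₀
    · rcases h with h | h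
      · subst h; simp [cosCoeff]
      · subst h
        simp only [if_pos (Or.inr rfl), freqSq_neg, hΦeven]
        push_cast; ring
    · simp [h]
  · rw [hck]
    simp only [ne_eq, mul_eq_zero, neg_eq_zero, Complex.ofReal_eq_zero]
    push_neg
    exact ⟨⟨hfk, hΦk₀⟩, by norm_num⟩
  · rintro ⟨v, hv⟩
    have := hv k₀
    rw [hck] at this
    have hsym : (-(freqSq d k₀) * (a + (-a / Φhat k₀) * Φhat k₀) : ℝ) = 0 := by
      field_simp
      ring
    rw [hsym] at this
    simp only [Complex.ofReal_zero, zero_mul] at this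
    have : -((freqSq d k₀ : ℝ) : ℂ) * ((Φhat k₀ : ℝ) : ℂ) * (1/2) ≠ 0 := by
      simp only [ne_eq, mul_eq_zero, neg_eq_zero, Complex.ofReal_eq_zero]
      push_neg
      exact ⟨⟨hfk, hΦk₀⟩, by norm_num⟩
    exact this ‹_›
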